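/- Let l, T > 0, N, j₀ ∈ ℕ with N ≥ 2, h = l/N, τ = T/j₀, grid points x_i = ih, t_j = jτ. Let α : {0,…,N} → (0,1) with α_i = α(x_i), c₁ > 0, and for each time level j let a_i^{j+1/2} ≥ c₁ (1 ≤ i ≤ N), d_i^{j+1/2} ≥ 0 (1 ≤ i ≤ N−1), and φ_i^{j+1/2} be given. Suppose σ ≥ 1/(3 − 2^{1−min_i α_i}) and σ ≤ 1, and y_i^j solves Δ_{0t_j}^{α_i} y_i = (Λ(σ y^{j+1} + (1−σ)y^j))_i + φ_i^{j+1/2} for 1 ≤ i ≤ N−1, with y_0^j = y_N^j = 0. Then for every 0 ≤ j ≤ j₀−1: (1, Δ_{0t_j}^{α_i}(y²)) + c₁ ‖(σ y^{j+1} + (1−σ)y^j)_x̄‖₀'² ≤ (l²/(2c₁)) ‖φ^{j+1/2}‖₀², where (1, Δ_{0t_j}^{α_i}(y²)) = Σ_{i=1}^{N−1} h · Δ_{0t_j}^{α_i}((y_i)²) and Δ_{0t_j}^{α_i}((y_i)²) denotes the discrete Caputo operator applied to the sequence j ↦ (y_i^j)². -/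

import Mathlib

/-!
Write `v = σ y^{j+1} + (1 - σ) y^j`. The L1 weights `w_k = t_{k+1}^{1-α} - t_k^{1-α}` decrease in
`k` by concavity of `t ↦ t^{1-α}`, and `σ ≥ 1/(3 - 2^{1-α})` gives `(1 - σ)² w₀ ≤ σ² (w₀ - w₁)`
since `w₁ = (2^{1-α} - 1) w₀`; by an Abel summation this yields Alikhanov's inequality
`Δ^α (y²) ≤ 2 v Δ^α y` at every node. Substituting the
scheme, summation by parts turns `2 (v, Λv)` into `-2 ∑ a (v_x̄)² h ≤ -2 c₁ ‖v_x̄‖₀'²`, and the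
source term is absorbed by Young's inequality together with the discrete Friedrichs inequality
`‖v‖₀² ≤ (l²/2) ‖v_x̄‖₀'²`.
-/

/-- The discrete analogue of the Caputo fractional derivative of order `α`
on the uniform grid `t_j = jτ`:
`Δ_{0t_j}^α y = (1/Γ(2-α)) Σ_{s=0}^{j} (t_{j-s+1}^{1-α} − t_{j-s}^{1-α}) (y^{s+1} − y^s)/τ`. -/
noncomputable def dCaputo (α τ : ℝ) (y : ℕ → ℝ) (j : ℕ) : ℝ :=
  (1 / Real.Gamma (2 - α)) *
    ∑ s ∈ Finset.range (j + 1),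
      (((((j : ℕ) - s + 1 : ℕ) : ℝ) * τ) ^ (1 - α) -
        ((((j : ℕ) - s : ℕ) : ℝ) * τ) ^ (1 - α)) * (y (s + 1) - y s) / τ

open Finset

noncomputable def caputoWeight (β τ : ℝ) (k : ℕ) : ℝ :=
  (((k + 1 : ℕ) : ℝ) * τ) ^ β - ((k : ℝ) * τ) ^ β

theorem dCaputo_eq_sum_caputoWeight (α τ : ℝ) (y : ℕ → ℝ) (j : ℕ) :
    dCaputo α τ y j = (Real.Gamma (2 - α) * τ)⁻¹ *
      ∑ s ∈ range (j + 1), caputoWeight (1 - α) τ (j - s) * (y (s + 1) - y s) := by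
  simp only [dCaputo, caputoWeight, mul_sum, div_eq_mul_inv, mul_inv]
  exact sum_congr rfl fun s _ => by ring

section caputoWeight

variable {β τ : ℝ}

theorem caputoWeight_nonneg (hβ : 0 ≤ β) (hτ : 0 ≤ τ) (k : ℕ) : 0 ≤ caputoWeight β τ k := by
  refine sub_nonneg.mpr (Real.rpow_le_rpow (by positivity) ?_ hβ)
  gcongr
  exact_mod_cast k.le_succ

theorem caputoWeight_antitone (hβ₀ : 0 ≤ β) (hβ₁ : β ≤ 1) (hτ : 0 ≤ τ) :
    Antitone (caputoWeight β τ) := by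
  refine antitone_nat_of_succ_le fun k => ?_
  -- midpoint concavity of `t ↦ t ^ β` at `(k + 1) τ`
  have hmid := (Real.concaveOn_rpow hβ₀ hβ₁).2 (Set.mem_Ici.mpr (by positivity : 0 ≤ (k : ℝ) * τ))
    (Set.mem_Ici.mpr (by positivity : 0 ≤ ((k : ℝ) + 2) * τ))
    (by norm_num : (0 : ℝ) ≤ 1 / 2) (by norm_num : (0 : ℝ) ≤ 1 / 2) (by norm_num)
  have harg : (1 / 2 : ℝ) • ((k : ℝ) * τ) + (1 / 2 : ℝ) • (((k : ℝ) + 2) * τ) = ((k : ℝ) + 1) * τ := by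
    simp only [smul_eq_mul]; ring
  rw [harg, smul_eq_mul, smul_eq_mul] at hmid
  simp only [caputoWeight]
  push_cast
  rw [show ((k : ℝ) + 1 + 1) = (k : ℝ) + 2 by ring]
  linarith

theorem caputoWeight_zero (hβ : β ≠ 0) : caputoWeight β τ 0 = τ ^ β := by
  simp [caputoWeight, Real.zero_rpow hβ]

theorem caputoWeight_one (hτ : 0 ≤ τ) : caputoWeight β τ 1 = (2 ^ β - 1) * τ ^ β := by
  simp only [caputoWeight]
  norm_num [Real.mul_rpow zero_le_two hτ]
  ring

end caputoWeight

theorem neg_mul_le_sum_mul_sub_succ {B G : ℕ → ℝ} (hB : Monotone B) (hB₀ : 0 ≤ B 0)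
    (hG : ∀ s, 0 ≤ G s) (n : ℕ) :
    -(B n * G (n + 1)) ≤ ∑ s ∈ range (n + 1), B s * (G s - G (s + 1)) := by
  induction n with
  | zero => simp only [zero_add, range_one, sum_singleton]; nlinarith [mul_nonneg hB₀ (hG 0)]
  | succ n ih =>
    rw [sum_range_succ]
    nlinarith [mul_nonneg (sub_nonneg.mpr (hB n.le_succ)) (hG (n + 1))]

theorem sum_antitone_mul_sub_sq_le {w : ℕ → ℝ} {σ : ℝ} (hw : Antitone w) (hw₀ : ∀ k, 0 ≤ w k)
    (hσ : (1 - σ) ^ 2 * w 0 ≤ σ ^ 2 * (w 0 - w 1)) (y : ℕ → ℝ) (j : ℕ) :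
    ∑ s ∈ range (j + 1), w (j - s) * (y (s + 1) ^ 2 - y s ^ 2) ≤
      2 * (σ * y (j + 1) + (1 - σ) * y j) * ∑ s ∈ range (j + 1), w (j - s) * (y (s + 1) - y s) := by
  set v := σ * y (j + 1) + (1 - σ) * y j
  set G : ℕ → ℝ := fun s => (v - y s) ^ 2
  have hterm : ∀ s, 2 * v * (w (j - s) * (y (s + 1) - y s)) - w (j - s) * (y (s + 1) ^ 2 - y s ^ 2)
      = w (j - s) * (G s - G (s + 1)) := fun s => by ring
  have hhead : -(w 1 * G j) ≤ ∑ s ∈ range j, w (j - s) * (G s - G (s + 1)) := by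
    cases j with
    | zero => simpa using mul_nonneg (hw₀ 1) (sq_nonneg _)
    | succ m =>
      have h := neg_mul_le_sum_mul_sub_succ (B := fun s => w (m + 1 - s)) (G := G)
        (fun s t hst => hw (by omega)) (hw₀ _) (fun s => sq_nonneg _) m
      simpa using h
  -- `v - y j = σ Δ` and `v - y (j + 1) = (σ - 1) Δ` for the last increment `Δ`
  have hlast : w 1 * G j ≤ w 0 * (G j - G (j + 1)) := by
    have hGj : G j = σ ^ 2 * (y (j + 1) - y j) ^ 2 := by simp only [G, v]; ring
    have hGj' : G (j + 1) = (1 - σ) ^ 2 * (y (j + 1) - y j) ^ 2 := by simp only [G, v]; ring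
    rw [hGj, hGj']
    nlinarith [mul_le_mul_of_nonneg_right hσ (sq_nonneg (y (j + 1) - y j))]
  rw [← sub_nonneg, mul_sum, ← sum_sub_distrib, sum_congr rfl fun s _ => hterm s,
    sum_range_succ, Nat.sub_self]
  linarith

theorem dCaputo_sq_le {α τ σ : ℝ} (hα₀ : 0 ≤ α) (hα₁ : α < 1) (hτ : 0 ≤ τ)
    (hσ : ((2:ℝ) ^ (1 - α) - 1) * σ ^ 2 ≤ 2 * σ - 1) (y : ℕ → ℝ) (j : ℕ) :
    dCaputo α τ (fun s => y s ^ 2) j ≤ 2 * (σ * y (j + 1) + (1 - σ) * y j) * dCaputo α τ y j := by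
  have hweight : (1 - σ) ^ 2 * caputoWeight (1 - α) τ 0 ≤
      σ ^ 2 * (caputoWeight (1 - α) τ 0 - caputoWeight (1 - α) τ 1) := by
    rw [caputoWeight_zero (by linarith), caputoWeight_one hτ]
    nlinarith [mul_le_mul_of_nonneg_left hσ (Real.rpow_nonneg hτ (1 - α))]
  have hsum := sum_antitone_mul_sub_sq_le (caputoWeight_antitone (by linarith) (by linarith) hτ)
    (caputoWeight_nonneg (by linarith) hτ) hweight y j
  have hΓ : 0 < Real.Gamma (2 - α) := Real.Gamma_pos_of_pos (by linarith)
  rw [dCaputo_eq_sum_caputoWeight, dCaputo_eq_sum_caputoWeight, mul_left_comm]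
  exact mul_le_mul_of_nonneg_left hsum (by positivity)

theorem sub_one_mul_sq_le_two_mul_sub_one {p q σ : ℝ} (hp₁ : 1 ≤ p) (hp₃ : p < 3)
    (hσ : 1 / (3 - p) ≤ σ) (hσ₁ : σ ≤ 1) (hqp : q ≤ p) : (q - 1) * σ ^ 2 ≤ 2 * σ - 1 := by
  have h3p : 0 < 3 - p := by linarith
  have hσ₀ : 0 < σ := lt_of_lt_of_le (by positivity) hσ
  have hσp : 1 ≤ σ * (3 - p) := (div_le_iff₀ h3p).mp hσ
  nlinarith [mul_le_mul_of_nonneg_right hqp (sq_nonneg σ),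
    mul_nonneg (sub_nonneg.2 hp₁) (mul_nonneg hσ₀.le (sub_nonneg.2 hσ₁))]

theorem two_rpow_sub_one_mul_sq_le {N : ℕ} {α : ℕ → ℝ} {σ : ℝ}
    (hα : ∀ i ≤ N, 0 ≤ α i ∧ α i ≤ 1)
    (hσ : 1 / (3 - (2:ℝ) ^ ((1:ℝ) -
      (range (N + 1)).inf' (nonempty_range_iff.mpr (Nat.succ_ne_zero N)) α)) ≤ σ)
    (hσ₁ : σ ≤ 1) {i : ℕ} (hi : i ≤ N) :
    ((2:ℝ) ^ (1 - α i) - 1) * σ ^ 2 ≤ 2 * σ - 1 := by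
  set m := (range (N + 1)).inf' (nonempty_range_iff.mpr (Nat.succ_ne_zero N)) α
  have hm₀ : 0 ≤ m := le_inf' _ _ fun k hk => (hα k (Nat.lt_succ_iff.mp (mem_range.mp hk))).1
  have hmi : m ≤ α i := inf'_le _ (mem_range.mpr (Nat.lt_succ_of_le hi))
  have hm₁ : m ≤ 1 := hmi.trans (hα i hi).2
  refine sub_one_mul_sq_le_two_mul_sub_one (Real.one_le_rpow one_le_two (by linarith)) ?_ hσ hσ₁
    (Real.rpow_le_rpow_of_exponent_le one_le_two (by linarith))
  calc (2:ℝ) ^ (1 - m) ≤ 2 ^ (1:ℝ) := Real.rpow_le_rpow_of_exponent_le one_le_two (by linarith)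
    _ < 3 := by norm_num

noncomputable def backwardDiff (h : ℝ) (v : ℕ → ℝ) (i : ℕ) : ℝ := (v i - v (i - 1)) / h

noncomputable def diffOperator (a d : ℕ → ℝ) (h : ℝ) (v : ℕ → ℝ) (i : ℕ) : ℝ :=
  (a (i + 1) * (v (i + 1) - v i) / h - a i * (v i - v (i - 1)) / h) / h - d i * v i

def gridNormSq (h : ℝ) (N : ℕ) (v : ℕ → ℝ) : ℝ := ∑ i ∈ Icc 1 (N - 1), h * v i ^ 2

def gridNormSq' (h : ℝ) (N : ℕ) (v : ℕ → ℝ) : ℝ := ∑ i ∈ Icc 1 N, h * v i ^ 2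

theorem sum_mul_flux_sub (A v : ℕ → ℝ) (hv₀ : v 0 = 0) (M : ℕ) :
    ∑ i ∈ Icc 1 M, v i * (A (i + 1) * (v (i + 1) - v i) - A i * (v i - v (i - 1))) =
      -∑ i ∈ Icc 1 (M + 1), A i * (v i - v (i - 1)) ^ 2 +
        v (M + 1) * (A (M + 1) * (v (M + 1) - v M)) := by
  induction M with
  | zero =>
    simp only [Icc_self, sum_singleton, tsub_self, hv₀, sub_zero, zero_add, Order.lt_one_iff,
      Icc_eq_empty_of_lt, sum_empty]
    ring
  | succ M ih =>
    rw [sum_Icc_succ_top (by omega), ih, sum_Icc_succ_top (by omega : 1 ≤ M + 1 + 1)]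
    simp only [Nat.add_sub_cancel]
    ring

theorem sum_mul_diffOperator_le {a d v : ℕ → ℝ} {h c : ℝ} {N : ℕ} (hh : 0 < h) (hN : 1 ≤ N)
    (hv₀ : v 0 = 0) (hvN : v N = 0) (ha : ∀ i ∈ Icc 1 N, c ≤ a i)
    (hd : ∀ i ∈ Icc 1 (N - 1), 0 ≤ d i) :
    ∑ i ∈ Icc 1 (N - 1), h * (v i * diffOperator a d h v i) ≤
      -(c * gridNormSq' h N (backwardDiff h v)) := by
  have hsplit : ∑ i ∈ Icc 1 (N - 1), h * (v i * diffOperator a d h v i) =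
      h⁻¹ * ∑ i ∈ Icc 1 (N - 1), v i * (a (i + 1) * (v (i + 1) - v i) - a i * (v i - v (i - 1)))
        - h * ∑ i ∈ Icc 1 (N - 1), d i * v i ^ 2 := by
    rw [mul_sum, mul_sum, ← sum_sub_distrib]
    refine sum_congr rfl fun i _ => ?_
    simp only [diffOperator]
    field_simp
  have hgreen := sum_mul_flux_sub a v hv₀ (N - 1)
  rw [Nat.sub_add_cancel hN, hvN, zero_mul, add_zero] at hgreen
  have hflux : c * ∑ i ∈ Icc 1 N, (v i - v (i - 1)) ^ 2 ≤ ∑ i ∈ Icc 1 N, a i * (v i - v (i - 1)) ^ 2 := by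
    rw [mul_sum]
    exact sum_le_sum fun i hi => mul_le_mul_of_nonneg_right (ha i hi) (sq_nonneg _)
  have hreact : 0 ≤ ∑ i ∈ Icc 1 (N - 1), d i * v i ^ 2 :=
    sum_nonneg fun i hi => mul_nonneg (hd i hi) (sq_nonneg _)
  have hnorm : gridNormSq' h N (backwardDiff h v) = h⁻¹ * ∑ i ∈ Icc 1 N, (v i - v (i - 1)) ^ 2 := by
    rw [gridNormSq', mul_sum]
    refine sum_congr rfl fun i _ => ?_
    simp only [backwardDiff]
    field_simp
  rw [hsplit, hgreen, hnorm]
  have hh' : 0 < h⁻¹ := inv_pos.mpr hh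
  nlinarith [mul_le_mul_of_nonneg_left hflux hh'.le, mul_nonneg hh.le hreact]

theorem eq_sum_Icc_sub (v : ℕ → ℝ) (hv₀ : v 0 = 0) (i : ℕ) :
    v i = ∑ k ∈ Icc 1 i, (v k - v (k - 1)) := by
  induction i with
  | zero => simp [hv₀]
  | succ i ih =>
    rw [sum_Icc_succ_top (by omega), ← ih, Nat.add_sub_cancel]
    ring

theorem sum_Icc_natCast (m : ℕ) : ∑ i ∈ Icc 1 m, (i : ℝ) = m * (m + 1) / 2 := by
  induction m with
  | zero => simp
  | succ m ih => rw [sum_Icc_succ_top (by omega), ih]; push_cast; ring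

theorem sum_sq_le_friedrichs (v : ℕ → ℝ) (hv₀ : v 0 = 0) (N : ℕ) :
    ∑ i ∈ Icc 1 (N - 1), v i ^ 2 ≤ (N : ℝ) ^ 2 / 2 * ∑ k ∈ Icc 1 N, (v k - v (k - 1)) ^ 2 := by
  set S := ∑ k ∈ Icc 1 N, (v k - v (k - 1)) ^ 2
  have hS : 0 ≤ S := sum_nonneg fun _ _ => sq_nonneg _
  -- Cauchy–Schwarz on `v i = ∑_{k ≤ i} (v k - v (k - 1))`
  have hpoint : ∀ i ∈ Icc 1 (N - 1), v i ^ 2 ≤ (i : ℝ) * S := fun i hi => by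
    have hcs := sq_sum_le_card_mul_sum_sq (s := Icc 1 i) (f := fun k => v k - v (k - 1))
    rw [← eq_sum_Icc_sub v hv₀ i, Nat.card_Icc, Nat.add_sub_cancel] at hcs
    refine hcs.trans (mul_le_mul_of_nonneg_left ?_ (Nat.cast_nonneg i))
    exact sum_le_sum_of_subset_of_nonneg (Icc_subset_Icc_right (by have := (mem_Icc.mp hi).2; omega))
      fun _ _ _ => sq_nonneg _
  calc ∑ i ∈ Icc 1 (N - 1), v i ^ 2 ≤ ∑ i ∈ Icc 1 (N - 1), (i : ℝ) * S := sum_le_sum hpoint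
    _ = ((N - 1 : ℕ) : ℝ) * ((N - 1 : ℕ) + 1) / 2 * S := by rw [← sum_mul, sum_Icc_natCast]
    _ ≤ (N : ℝ) ^ 2 / 2 * S := by
      gcongr
      rcases Nat.eq_zero_or_pos N with rfl | hN
      · simp
      · rw [Nat.cast_sub hN]; push_cast; nlinarith

theorem gridNormSq_le_friedrichs {h : ℝ} (hh : 0 < h) {v : ℕ → ℝ} (hv₀ : v 0 = 0) (N : ℕ) :
    gridNormSq h N v ≤ (h * N) ^ 2 / 2 * gridNormSq' h N (backwardDiff h v) := by
  have hscale : gridNormSq' h N (backwardDiff h v) = h⁻¹ * ∑ k ∈ Icc 1 N, (v k - v (k - 1)) ^ 2 := by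
    rw [gridNormSq', mul_sum]
    refine sum_congr rfl fun i _ => ?_
    simp only [backwardDiff]
    field_simp
  rw [gridNormSq, ← mul_sum, hscale]
  calc h * ∑ i ∈ Icc 1 (N - 1), v i ^ 2
      ≤ h * ((N : ℝ) ^ 2 / 2 * ∑ k ∈ Icc 1 N, (v k - v (k - 1)) ^ 2) :=
        mul_le_mul_of_nonneg_left (sum_sq_le_friedrichs v hv₀ N) hh.le
    _ = (h * N) ^ 2 / 2 * (h⁻¹ * ∑ k ∈ Icc 1 N, (v k - v (k - 1)) ^ 2) := by
        field_simp

theorem two_mul_sum_mul_le {h ε : ℝ} (hh : 0 ≤ h) (hε : 0 < ε) (N : ℕ) (u w : ℕ → ℝ) :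
    2 * ∑ i ∈ Icc 1 (N - 1), h * (u i * w i) ≤ ε * gridNormSq h N u + ε⁻¹ * gridNormSq h N w := by
  simp only [gridNormSq, mul_sum, ← sum_add_distrib]
  refine sum_le_sum fun i _ => ?_
  nlinarith [mul_le_mul_of_nonneg_left (two_mul_le_add_mul_sq (a := u i) (b := w i) hε) hh]

theorem two_mul_sum_mul_diffOperator_add_le {a d v : ℕ → ℝ} {h c : ℝ} {N : ℕ} (hh : 0 < h)
    (hc : 0 < c) (hN : 1 ≤ N) (hv₀ : v 0 = 0) (hvN : v N = 0) (ha : ∀ i ∈ Icc 1 N, c ≤ a i)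
    (hd : ∀ i ∈ Icc 1 (N - 1), 0 ≤ d i) (f : ℕ → ℝ) :
    2 * ∑ i ∈ Icc 1 (N - 1), h * (v i * diffOperator a d h v i) +
        2 * ∑ i ∈ Icc 1 (N - 1), h * (v i * f i) + c * gridNormSq' h N (backwardDiff h v) ≤
      (h * N) ^ 2 / (2 * c) * gridNormSq h N f := by
  have hlap := sum_mul_diffOperator_le hh hN hv₀ hvN ha hd
  have hl : 0 < h * N := mul_pos hh (by exact_mod_cast hN)
  have hyoung := two_mul_sum_mul_le hh.le (by positivity : 0 < 2 * c / (h * N) ^ 2) N v f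
  rw [inv_div] at hyoung
  have hfriedrichs : 2 * c / (h * N) ^ 2 * gridNormSq h N v ≤
      c * gridNormSq' h N (backwardDiff h v) := by
    calc 2 * c / (h * N) ^ 2 * gridNormSq h N v
        ≤ 2 * c / (h * N) ^ 2 * ((h * N) ^ 2 / 2 * gridNormSq' h N (backwardDiff h v)) := by
          gcongr
          exact gridNormSq_le_friedrichs hh hv₀ N
      _ = c * gridNormSq' h N (backwardDiff h v) := by field_simp
  linarith

theorem dirichlet_scheme_level_estimate_general
    (l T c₁ σ : ℝ) (N j₀ : ℕ) (hN : 2 ≤ N)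
    (hl : 0 < l) (hT : 0 < T) (hc₁ : 0 < c₁)
    (h τ : ℝ) (hh : h = l / N) (hτ : τ = T / j₀)
    (α : ℕ → ℝ) (hα : ∀ i ≤ N, 0 < α i ∧ α i < 1)
    (a d φ : ℕ → ℕ → ℝ)
    (ha : ∀ j < j₀, ∀ i, 1 ≤ i → i ≤ N → c₁ ≤ a i j)
    (hd : ∀ j < j₀, ∀ i, 1 ≤ i → i ≤ N - 1 → 0 ≤ d i j)
    (hσ1 : 1 / (3 - (2:ℝ) ^ ((1:ℝ) -
      (Finset.range (N + 1)).inf' (Finset.nonempty_range_iff.mpr (Nat.succ_ne_zero N)) α)) ≤ σ)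
    (hσ2 : σ ≤ 1)
    (y : ℕ → ℕ → ℝ)
    -- the difference scheme (19):
    (hscheme : ∀ j < j₀, ∀ i, 1 ≤ i → i ≤ N - 1 →
      dCaputo (α i) τ (fun s => y i s) j =
        ((a (i + 1) j * ((σ * y (i + 1) (j + 1) + (1 - σ) * y (i + 1) j) -
            (σ * y i (j + 1) + (1 - σ) * y i j)) / h -
          a i j * ((σ * y i (j + 1) + (1 - σ) * y i j) -
            (σ * y (i - 1) (j + 1) + (1 - σ) * y (i - 1) j)) / h) / h -
          d i j * (σ * y i (j + 1) + (1 - σ) * y i j)) + φ i j)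
    -- boundary conditions (20):
    (hbc : ∀ j ≤ j₀, y 0 j = 0 ∧ y N j = 0) :
    ∀ j < j₀,
      (∑ i ∈ Finset.Icc 1 (N - 1), h *
        dCaputo (α i) τ (fun s => (y i s) ^ 2) j) +
      c₁ * (∑ i ∈ Finset.Icc 1 N, h *
        (((σ * y i (j + 1) + (1 - σ) * y i j) -
          (σ * y (i - 1) (j + 1) + (1 - σ) * y (i - 1) j)) / h) ^ 2) ≤
      l ^ 2 / (2 * c₁) * ∑ i ∈ Finset.Icc 1 (N - 1), h * (φ i j) ^ 2 := by
  intro j hj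
  set v : ℕ → ℝ := fun i => σ * y i (j + 1) + (1 - σ) * y i j
  have hτ₀ : 0 ≤ τ := hτ ▸ div_nonneg hT.le (Nat.cast_nonneg j₀)
  have hh₀ : 0 < h := hh ▸ div_pos hl (by exact_mod_cast (by omega : 0 < N))
  have hhN : h * N = l := by rw [hh]; field_simp
  have hv₀ : v 0 = 0 := by simp [v, (hbc j hj.le).1, (hbc (j + 1) hj).1]
  have hvN : v N = 0 := by simp [v, (hbc j hj.le).2, (hbc (j + 1) hj).2]
  have hcaputo : ∑ i ∈ Icc 1 (N - 1), h * dCaputo (α i) τ (fun s => y i s ^ 2) j ≤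
      2 * ∑ i ∈ Icc 1 (N - 1), h * (v i * diffOperator (a · j) (d · j) h v i) +
        2 * ∑ i ∈ Icc 1 (N - 1), h * (v i * φ i j) := by
    rw [mul_sum, mul_sum, ← sum_add_distrib]
    refine sum_le_sum fun i hi => ?_
    obtain ⟨hi₁, hiN⟩ := mem_Icc.mp hi
    have hαi := hα i (by omega)
    have hlevel := dCaputo_sq_le hαi.1.le hαi.2 hτ₀
      (two_rpow_sub_one_mul_sq_le (fun k hk => ⟨(hα k hk).1.le, (hα k hk).2.le⟩) hσ1 hσ2
        (by omega)) (y i) j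
    rw [hscheme j hj i hi₁ hiN] at hlevel
    have := mul_le_mul_of_nonneg_left hlevel hh₀.le
    simp only [diffOperator]
    linarith
  have henergy := two_mul_sum_mul_diffOperator_add_le (a := (a · j)) (d := (d · j)) hh₀ hc₁
    (by omega) hv₀ hvN (fun i hi => ha j hj i (mem_Icc.mp hi).1 (mem_Icc.mp hi).2)
    (fun i hi => hd j hj i (mem_Icc.mp hi).1 (mem_Icc.mp hi).2) (φ · j)
  rw [hhN] at henergy
  change _ + c₁ * gridNormSq' h N (backwardDiff h v) ≤ l ^ 2 / (2 * c₁) * gridNormSq h N (φ · j)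
  linarith

/-- The per-time-level energy inequality (30) for the weighted difference
scheme (19)–(20) for the Dirichlet problem, valid for
`σ ≥ 1/(3 − 2^{1−min_i α_i})`:
`(1, Δ_{0t_j}^{α_i}(y²)) + c₁‖y_x̄^{(σ)}‖₀'² ≤ (l²/(2c₁))‖φ‖₀²`. -/
theorem dirichlet_scheme_level_estimate
    (l T c₁ σ : ℝ) (N j₀ : ℕ) (hN : 2 ≤ N) (hj₀ : 0 < j₀)
    (hl : 0 < l) (hT : 0 < T) (hc₁ : 0 < c₁)
    (h τ : ℝ) (hh : h = l / N) (hτ : τ = T / j₀)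
    (α : ℕ → ℝ) (hα : ∀ i ≤ N, 0 < α i ∧ α i < 1)
    (a d φ : ℕ → ℕ → ℝ)
    (ha : ∀ j < j₀, ∀ i, 1 ≤ i → i ≤ N → c₁ ≤ a i j)
    (hd : ∀ j < j₀, ∀ i, 1 ≤ i → i ≤ N - 1 → 0 ≤ d i j)
    (hσ1 : 1 / (3 - (2:ℝ) ^ ((1:ℝ) -
      (Finset.range (N + 1)).inf' (Finset.nonempty_range_iff.mpr (Nat.succ_ne_zero N)) α)) ≤ σ)
    (hσ2 : σ ≤ 1)
    (y : ℕ → ℕ → ℝ)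
    -- the difference scheme (19):
    (hscheme : ∀ j < j₀, ∀ i, 1 ≤ i → i ≤ N - 1 →
      dCaputo (α i) τ (fun s => y i s) j =
        ((a (i + 1) j * ((σ * y (i + 1) (j + 1) + (1 - σ) * y (i + 1) j) -
            (σ * y i (j + 1) + (1 - σ) * y i j)) / h -
          a i j * ((σ * y i (j + 1) + (1 - σ) * y i j) -
            (σ * y (i - 1) (j + 1) + (1 - σ) * y (i - 1) j)) / h) / h -
          d i j * (σ * y i (j + 1) + (1 - σ) * y i j)) + φ i j)
    -- boundary conditions (20):
    (hbc : ∀ j ≤ j₀, y 0 j = 0 ∧ y N j = 0) :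
    ∀ j < j₀,
      (∑ i ∈ Finset.Icc 1 (N - 1), h *
        dCaputo (α i) τ (fun s => (y i s) ^ 2) j) +
      c₁ * (∑ i ∈ Finset.Icc 1 N, h *
        (((σ * y i (j + 1) + (1 - σ) * y i j) -
          (σ * y (i - 1) (j + 1) + (1 - σ) * y (i - 1) j)) / h) ^ 2) ≤
      l ^ 2 / (2 * c₁) * ∑ i ∈ Finset.Icc 1 (N - 1), h * (φ i j) ^ 2 :=
  dirichlet_scheme_level_estimate_general l T c₁ σ N j₀ hN hl hT hc₁ h τ hh hτ α hα a d φ ha hd hσ1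
    hσ2 y hscheme hbc
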